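/- Let M be an n×n real matrix, δ a delay matrix with zero diagonal and max δ ≤ κ, and let c ∈ ℝ. Then every eigenvalue μ of (cM)^{(δ,κ)} with μ ≠ 0 satisfies: μ is an eigenvalue of (cM)^{(δ,κ)} if and only if there exists v₀ ≠ 0 with μ (v₀)_i = Σ_j μ^{-δ_{ji}} c M_{ij} (v₀)_j for all i (interpreting the equation after multiplying through by μ^{max δ}). -/

import Mathlib

/-!
An eigenvector of the delayed operator for `μ` is a history whose block rows satisfy
`x^(t+1) = μ x^(t)`, so it is the geometric history `(μ^κ v₀, …, μ v₀, v₀)` of its oldest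
block `v₀`. On geometric histories the shift rows hold automatically, and the top block row
is exactly the polynomial eigenvalue problem for `v₀`.
-/

open Matrix

/-- Spectral radius of a complex matrix: sup of moduli of its spectrum. -/
noncomputable def specRad {m : Type*} [Fintype m] [DecidableEq m] (A : Matrix m m ℂ) : ℝ :=
  sSup ((fun z : ℂ => ‖z‖) '' spectrum ℂ A)

/-- Delayed iteration operator `M^(δ,κ)` on the history space `ℝ^((κ+1)n)` (complexified).
The partition of `M` into `ℓ × ℓ` blocks is encoded by `p : Fin n → Fin ℓ` assigning each
row/column index to its block.  The history vector `v` stores `v (s, ·) = x^(κ - s)`,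
and the operator maps `(x^(κ), …, x^(0))` to `(x^(κ+1), …, x^(1))` where
`x^(κ+1)_i = ∑_j M_{ij} x^(κ - δ_{ji})_j`. -/
noncomputable def delayedOp (n ℓ κ : ℕ) (M : Matrix (Fin n) (Fin n) ℝ)
    (p : Fin n → Fin ℓ) (δ : Fin ℓ → Fin ℓ → ℕ) :
    Matrix (Fin (κ + 1) × Fin n) (Fin (κ + 1) × Fin n) ℂ :=
  fun st tb =>
    if st.1.val = 0 then
      (if tb.1.val = δ (p tb.2) (p st.2) then (M st.2 tb.2 : ℂ) else 0)
    else
      (if tb.1.val + 1 = st.1.val ∧ st.2 = tb.2 then 1 else 0)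

theorem Matrix.mem_spectrum_iff_exists_mulVec_eq_smul {K m : Type*} [Field K] [Fintype m]
    [DecidableEq m] (A : Matrix m m K) (μ : K) :
    μ ∈ spectrum K A ↔ ∃ v : m → K, v ≠ 0 ∧ A *ᵥ v = μ • v := by
  rw [← Matrix.spectrum_toLin', ← Module.End.hasEigenvalue_iff_mem_spectrum,
    Module.End.hasEigenvalue_iff, Submodule.ne_bot_iff]
  simp only [Module.End.mem_eigenspace_iff, Matrix.toLin'_apply]
  exact ⟨fun ⟨v, hv, hne⟩ => ⟨v, hne, hv⟩, fun ⟨v, hne, hv⟩ => ⟨v, hv, hne⟩⟩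

def geomHistory {R ι : Type*} [Monoid R] (κ : ℕ) (μ : R) (v₀ : ι → R) : Fin (κ + 1) × ι → R :=
  fun q => μ ^ (κ - q.1) * v₀ q.2

section GeomHistory

variable {R ι : Type*} [Monoid R] {κ : ℕ} {μ : R}

@[simp]
theorem geomHistory_last (v₀ : ι → R) (i : ι) : geomHistory κ μ v₀ (Fin.last κ, i) = v₀ i := by
  simp [geomHistory]

theorem geomHistory_castSucc (v₀ : ι → R) (s : Fin κ) (i : ι) :
    geomHistory κ μ v₀ (s.castSucc, i) = μ * geomHistory κ μ v₀ (s.succ, i) := by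
  simp only [geomHistory, Fin.val_castSucc, Fin.val_succ, ← mul_assoc, ← pow_succ']
  congr 2
  omega

theorem eq_geomHistory_of_castSucc_eq_mul_succ {v : Fin (κ + 1) × ι → R}
    (hv : ∀ (s : Fin κ) i, v (s.castSucc, i) = μ * v (s.succ, i)) :
    v = geomHistory κ μ (fun i => v (Fin.last κ, i)) := by
  funext ⟨s, i⟩
  induction s using Fin.reverseInduction with
  | last => rw [geomHistory_last]
  | cast s ih => rw [hv, ih, geomHistory_castSucc]

end GeomHistory

theorem geomHistory_eq_zero_iff {R ι : Type*} [MonoidWithZero R] {κ : ℕ} {μ : R} (v₀ : ι → R) :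
    geomHistory κ μ v₀ = 0 ↔ v₀ = 0 := by
  refine ⟨fun h => funext fun i => ?_, fun h => ?_⟩
  · simpa using congrFun h (Fin.last κ, i)
  · subst h
    funext q
    simp [geomHistory]

section DelayedOp

variable {n ℓ κ : ℕ} (M : Matrix (Fin n) (Fin n) ℝ) (p : Fin n → Fin ℓ) (δ : Fin ℓ → Fin ℓ → ℕ)

theorem delayedOp_mulVec_succ (v : Fin (κ + 1) × Fin n → ℂ) (s : Fin κ) (i : Fin n) :
    (delayedOp n ℓ κ M p δ *ᵥ v) (s.succ, i) = v (s.castSucc, i) := by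
  simp only [mulVec, dotProduct, delayedOp, Fin.val_succ, Nat.succ_ne_zero, if_false]
  rw [Fintype.sum_eq_single (s.castSucc, i)]
  · simp
  · rintro ⟨t, b⟩ hne
    rw [if_neg, zero_mul]
    rintro ⟨ht, rfl⟩
    exact hne (Prod.ext (Fin.ext (by simpa using ht)) rfl)

theorem delayedOp_mulVec_zero {δ : Fin ℓ → Fin ℓ → ℕ} (hκ : ∀ i j, δ i j ≤ κ)
    (v : Fin (κ + 1) × Fin n → ℂ) (i : Fin n) :
    (delayedOp n ℓ κ M p δ *ᵥ v) (0, i) =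
      ∑ b, (M i b : ℂ) * v (⟨δ (p b) (p i), Nat.lt_succ_of_le (hκ _ _)⟩, b) := by
  simp only [mulVec, dotProduct, delayedOp, Fin.val_zero, if_true, ite_mul, zero_mul]
  rw [Fintype.sum_prod_type, Finset.sum_comm]
  refine Finset.sum_congr rfl fun b _ => ?_
  rw [Fintype.sum_eq_single ⟨δ (p b) (p i), Nat.lt_succ_of_le (hκ _ _)⟩]
  · simp
  · intro t ht
    rw [if_neg (fun h => ht (Fin.ext h))]

theorem eq_geomHistory_of_delayedOp_mulVec_eq_smul {μ : ℂ} {v : Fin (κ + 1) × Fin n → ℂ}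
    (hv : delayedOp n ℓ κ M p δ *ᵥ v = μ • v) :
    v = geomHistory κ μ (fun i => v (Fin.last κ, i)) :=
  eq_geomHistory_of_castSucc_eq_mul_succ fun s i => by
    rw [← delayedOp_mulVec_succ M p δ v, hv, Pi.smul_apply, smul_eq_mul]

theorem delayedOp_mulVec_geomHistory_eq_smul_iff {δ : Fin ℓ → Fin ℓ → ℕ} (hκ : ∀ i j, δ i j ≤ κ)
    (μ : ℂ) (v₀ : Fin n → ℂ) :
    delayedOp n ℓ κ M p δ *ᵥ geomHistory κ μ v₀ = μ • geomHistory κ μ v₀ ↔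
      ∀ a, μ ^ (κ + 1) * v₀ a = ∑ b, μ ^ (κ - δ (p b) (p a)) * (M a b : ℂ) * v₀ b := by
  simp only [funext_iff, Prod.forall, Fin.forall_fin_succ, delayedOp_mulVec_succ,
    geomHistory_castSucc, Pi.smul_apply, smul_eq_mul, implies_true, and_true,
    delayedOp_mulVec_zero M p hκ]
  refine forall_congr' fun a => ?_
  simp only [geomHistory, Fin.val_zero, Nat.sub_zero, pow_succ', mul_assoc,
    mul_left_comm (M a _ : ℂ), eq_comm]

end DelayedOp

theorem delayed_polynomial_eigenproblem_general (n ℓ κ : ℕ) (M : Matrix (Fin n) (Fin n) ℝ)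
    (p : Fin n → Fin ℓ) (δ : Fin ℓ → Fin ℓ → ℕ)
    (hκ : ∀ i j, δ i j ≤ κ)
    (c : ℝ) (μ : ℂ) :
    μ ∈ spectrum ℂ (delayedOp n ℓ κ (c • M) p δ) ↔
      ∃ v₀ : Fin n → ℂ, v₀ ≠ 0 ∧
        ∀ a : Fin n, μ ^ (κ + 1) * v₀ a
          = ∑ b : Fin n, μ ^ (κ - δ (p b) (p a)) * ((c * M a b : ℝ) : ℂ) * v₀ b := by
  rw [Matrix.mem_spectrum_iff_exists_mulVec_eq_smul]
  constructor
  · rintro ⟨v, hv, hμv⟩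
    have hv_geom := eq_geomHistory_of_delayedOp_mulVec_eq_smul _ p δ hμv
    refine ⟨fun i => v (Fin.last κ, i), fun h => hv ?_, ?_⟩
    · rwa [hv_geom, geomHistory_eq_zero_iff]
    · rw [hv_geom] at hμv
      exact (delayedOp_mulVec_geomHistory_eq_smul_iff _ p hκ μ _).1 hμv
  · rintro ⟨v₀, hv₀, hpoly⟩
    exact ⟨geomHistory κ μ v₀, (geomHistory_eq_zero_iff v₀).not.2 hv₀,
      (delayedOp_mulVec_geomHistory_eq_smul_iff _ p hκ μ v₀).2 hpoly⟩

/-- Nonzero eigenvalues of the delayed operator of c*M are exactly the solutions of the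
polynomial eigenvalue problem mu^(k+1) v0 = sum_j mu^(k - delta_ji) c M_ij (v0)_j. -/
theorem delayed_polynomial_eigenproblem (n ℓ κ : ℕ) (M : Matrix (Fin n) (Fin n) ℝ)
    (p : Fin n → Fin ℓ) (δ : Fin ℓ → Fin ℓ → ℕ)
    (hδ0 : ∀ i, δ i i = 0) (hκ : ∀ i j, δ i j ≤ κ)
    (c : ℝ) (μ : ℂ) (hμ : μ ≠ 0) :
    μ ∈ spectrum ℂ (delayedOp n ℓ κ (c • M) p δ) ↔
      ∃ v₀ : Fin n → ℂ, v₀ ≠ 0 ∧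
        ∀ a : Fin n, μ ^ (κ + 1) * v₀ a
          = ∑ b : Fin n, μ ^ (κ - δ (p b) (p a)) * ((c * M a b : ℝ) : ℂ) * v₀ b :=
  delayed_polynomial_eigenproblem_general n ℓ κ M p δ hκ c μ
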